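/- If G is a gate obtained from a gate H using disjoint cliques C and C' of H and a chordless path P:(v_1,...,v_l) disjoint from H, then the maximal cliques of G are exactly: the maximal cliques of H other than C and C'; the sets {v_i, v_{i+1}} for 1 ≤ i ≤ l−1; the set C ∪ {v_1}; and the set C' ∪ {v_l}. -/

import Mathlib

/-- A maximal clique (a maximal complete vertex set) of a simple graph. -/
def IsMaxClique {V : Type} (G : SimpleGraph V) (s : Set V) : Prop :=
  G.IsClique s ∧ ∀ t : Set V, G.IsClique t → s ⊆ t → s = t

/-- The number of maximal cliques of a graph. -/
noncomputable def numMaxCliques {V : Type} (G : SimpleGraph V) : ℕ :=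
  {s : Set V | IsMaxClique G s}.ncard

/-- The graph obtained from `G` and a chordless path on `l` new vertices by joining the
first vertex of the path to every vertex of `A` and the last vertex to every vertex of `B`. -/
def joinPath {V : Type} (G : SimpleGraph V) (A B : Set V) (l : ℕ) :
    SimpleGraph (V ⊕ Fin l) where
  Adj x y :=
    match x, y with
    | Sum.inl a, Sum.inl b => G.Adj a b
    | Sum.inl a, Sum.inr i => (i.val = 0 ∧ a ∈ A) ∨ (i.val = l - 1 ∧ a ∈ B)
    | Sum.inr i, Sum.inl a => (i.val = 0 ∧ a ∈ A) ∨ (i.val = l - 1 ∧ a ∈ B)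
    | Sum.inr i, Sum.inr j => i.val + 1 = j.val ∨ j.val + 1 = i.val
  symm :=
    ⟨by rintro (a | i) (b | j) h <;> simp_all <;> tauto⟩
  loopless := ⟨by
    rintro (a | i) h
    · exact G.loopless.irrefl a h
    · rcases h with h | h <;> omega⟩

/-- Gates, defined recursively (up to isomorphism): chordless cycles `Cₙ`, `n ≥ 4`, are
gates, and joining a new chordless path to two disjoint maximal cliques of a gate
yields a gate. -/
inductive IsGate : {V : Type} → SimpleGraph V → Prop
  | cycle (n : ℕ) (hn : 4 ≤ n) : IsGate (SimpleGraph.cycleGraph n)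
  | extend {V : Type} (G : SimpleGraph V) (C C' : Set V) (l : ℕ)
      (hG : IsGate G) (hC : IsMaxClique G C) (hC' : IsMaxClique G C')
      (hdisj : Disjoint C C') (hl : 2 ≤ l) : IsGate (joinPath G C C' l)
  | iso {V W : Type} (G : SimpleGraph V) (H : SimpleGraph W)
      (hG : IsGate G) (e : G ≃g H) : IsGate H

/-- An EPT representation of `G`: a family of paths in a host tree such that two distinct
vertices are adjacent iff their paths share an edge of the tree. -/
structure EPTRep {V : Type} (G : SimpleGraph V) where
  VT : Type
  T : SimpleGraph VT
  tree : T.IsTree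
  src : V → VT
  tgt : V → VT
  walk : (v : V) → T.Walk (src v) (tgt v)
  isPath : ∀ v, (walk v).IsPath
  adj_iff : ∀ v w : V, v ≠ w →
    (G.Adj v w ↔ ∃ e : Sym2 VT, e ∈ (walk v).edges ∧ e ∈ (walk w).edges)

/-- The edge set of the path representing `v`. -/
def EPTRep.edges {V : Type} {G : SimpleGraph V} (R : EPTRep G) (v : V) :
    Set (Sym2 R.VT) := {e | e ∈ (R.walk v).edges}

/-- The representation is Helly: every nonempty pairwise edge-intersecting subfamily of
paths has a common edge. -/
def EPTRep.Helly {V : Type} {G : SimpleGraph V} (R : EPTRep G) : Prop :=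
  ∀ S : Set V, S.Nonempty →
    (∀ u ∈ S, ∀ v ∈ S, (R.edges u ∩ R.edges v).Nonempty) →
    (⋂ v ∈ S, R.edges v).Nonempty

/-- The host tree has maximum degree at most `h`. -/
def EPTRep.maxDegLE {V : Type} {G : SimpleGraph V} (R : EPTRep G) (h : ℕ) : Prop :=
  ∀ x : R.VT, (R.T.neighborSet x).ncard ≤ h

/-- The class `[h,2,2]`. -/
def InEPTClass (h : ℕ) {V : Type} (G : SimpleGraph V) : Prop :=
  ∃ R : EPTRep G, R.maxDegLE h

/-- Helly EPT graphs. -/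
def IsHellyEPT {V : Type} (G : SimpleGraph V) : Prop :=
  ∃ R : EPTRep G, R.Helly

/-- The class Helly `[h,2,2]`. -/
def InHellyClass (h : ℕ) {V : Type} (G : SimpleGraph V) : Prop :=
  ∃ R : EPTRep G, R.Helly ∧ R.maxDegLE h

/-- Three paths of the representation form a claw at some claw of the host tree. -/
def EPTRep.FormsClaw {V : Type} {G : SimpleGraph V} (R : EPTRep G) (a b c : V) : Prop :=
  ∃ q x y z : R.VT, R.T.Adj q x ∧ R.T.Adj q y ∧ R.T.Adj q z ∧
    x ≠ y ∧ y ≠ z ∧ x ≠ z ∧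
    s(q, x) ∈ R.edges a ∧ s(q, y) ∈ R.edges a ∧
    s(q, y) ∈ R.edges b ∧ s(q, z) ∈ R.edges b ∧
    s(q, x) ∈ R.edges c ∧ s(q, z) ∈ R.edges c

/-- A multipie of size `k` whose paths are those representing the vertices in `S`. -/
def IsMultipie {V : Type} {G : SimpleGraph V} (R : EPTRep G) (k : ℕ) (S : Set V) : Prop :=
  ∃ (q : R.VT) (qi : Fin k → R.VT), Function.Injective qi ∧
    (∀ i, R.T.Adj q (qi i)) ∧
    (∀ v ∈ S, {i : Fin k | qi i ∈ (R.walk v).support}.ncard = 2) ∧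
    (∀ u ∈ S, ∀ v ∈ S, ∀ i j : Fin k, i ≠ j →
      qi i ∈ (R.walk u).support → qi j ∈ (R.walk u).support →
      qi i ∈ (R.walk v).support → qi j ∈ (R.walk v).support → u = v) ∧
    (∀ i, 2 ≤ {v ∈ S | s(q, qi i) ∈ R.edges v}.ncard) ∧
    (∀ a ∈ S, ∀ b ∈ S, ∀ c ∈ S, ¬ R.FormsClaw a b c)

/-- The next index around a cycle. -/
def finNext {k : ℕ} (hk : 0 < k) (i : Fin k) : Fin k :=
  ⟨(i.val + 1) % k, Nat.mod_lt _ hk⟩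

/-- `G` has a clique separator: a complete vertex set whose removal disconnects the graph. -/
def HasCliqueSep {V : Type} (G : SimpleGraph V) : Prop :=
  ∃ C : Set V, G.IsClique C ∧ ¬ (G.induce Cᶜ).Preconnected

/-- An atom of `G`: a maximal vertex subset inducing a connected subgraph without clique
separators. -/
def IsAtomOf {V : Type} (G : SimpleGraph V) (A : Set V) : Prop :=
  (G.induce A).Connected ∧ ¬ HasCliqueSep (G.induce A) ∧
    ∀ B : Set V, A ⊆ B → (G.induce B).Connected → ¬ HasCliqueSep (G.induce B) → A = B

/-! A maximal clique of `joinPath G C C' l` either avoids the new path, and is then a maximal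
clique of `G` that does not extend to `v₁` or `v_l`, so it is neither `C` nor `C'`; or it
contains some `vᵢ`, whose neighbourhood is `vᵢ₋₁`, `vᵢ₊₁`, together with `C` when `i = 1` and
`C'` when `i = l`. Since `C` and `C'` are disjoint, no vertex of `G` is adjacent to two path
vertices, which forces the clique to be an edge of the path, `C ∪ {v₁}` or `C' ∪ {v_l}`.
Here `vᵢ` is `Sum.inr (i - 1)`. -/

theorem isMaxClique_iff_forall_adj_mem {V : Type} {G : SimpleGraph V} {s : Set V} :
    IsMaxClique G s ↔ G.IsClique s ∧ ∀ v, (∀ w ∈ s, v ≠ w → G.Adj v w) → v ∈ s := by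
  refine ⟨fun hs => ⟨hs.1, fun v hv => ?_⟩, fun ⟨hs, hmax⟩ => ⟨hs, fun t ht hst => ?_⟩⟩
  · rw [hs.2 (insert v s) (SimpleGraph.isClique_insert.2 ⟨hs.1, hv⟩) (Set.subset_insert v s)]
    exact Set.mem_insert v s
  · exact hst.antisymm fun v hv => hmax v fun w hw hvw => ht hv (hst hw) hvw

theorem IsMaxClique.nonempty {V : Type} [Nonempty V] {G : SimpleGraph V} {s : Set V}
    (hs : IsMaxClique G s) : s.Nonempty := by
  obtain ⟨v⟩ := ‹Nonempty V›
  rcases s.eq_empty_or_nonempty with rfl | h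
  · exact absurd ((isMaxClique_iff_forall_adj_mem.1 hs).2 v (by simp)) (Set.notMem_empty v)
  · exact h

theorem IsGate.nonempty {V : Type} {G : SimpleGraph V} (h : IsGate G) : Nonempty V := by
  induction h with
  | cycle n hn => exact ⟨⟨0, by omega⟩⟩
  | extend _ _ _ l _ _ _ _ hl => exact ⟨Sum.inr ⟨0, by omega⟩⟩
  | iso _ _ _ e ih => exact ⟨e ih.some⟩

namespace joinPath

variable {V : Type} {G : SimpleGraph V} {A B : Set V} {l : ℕ}

@[simp]
theorem adj_inl_inl {a b : V} : (joinPath G A B l).Adj (Sum.inl a) (Sum.inl b) ↔ G.Adj a b :=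
  Iff.rfl

@[simp]
theorem adj_inl_inr {a : V} {i : Fin l} :
    (joinPath G A B l).Adj (Sum.inl a) (Sum.inr i) ↔
      (i.val = 0 ∧ a ∈ A) ∨ (i.val = l - 1 ∧ a ∈ B) :=
  Iff.rfl

@[simp]
theorem adj_inr_inl {a : V} {i : Fin l} :
    (joinPath G A B l).Adj (Sum.inr i) (Sum.inl a) ↔
      (i.val = 0 ∧ a ∈ A) ∨ (i.val = l - 1 ∧ a ∈ B) :=
  Iff.rfl

@[simp]
theorem adj_inr_inr {i j : Fin l} :
    (joinPath G A B l).Adj (Sum.inr i) (Sum.inr j) ↔ i.val + 1 = j.val ∨ j.val + 1 = i.val :=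
  Iff.rfl

theorem isClique_image_inl_iff {D : Set V} :
    (joinPath G A B l).IsClique (Sum.inl '' D) ↔ G.IsClique D :=
  Sum.inl_injective.injOn.pairwise_image

theorem isClique_first (hA : G.IsClique A) (hl : 0 < l) :
    (joinPath G A B l).IsClique (Sum.inl '' A ∪ {Sum.inr ⟨0, hl⟩}) := by
  rw [Set.union_singleton, SimpleGraph.isClique_insert, isClique_image_inl_iff]
  refine ⟨hA, ?_⟩
  rintro _ ⟨a, ha, rfl⟩ -
  simp [ha]

theorem isClique_last (hB : G.IsClique B) (hl : 0 < l) :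
    (joinPath G A B l).IsClique
      (Sum.inl '' B ∪ {Sum.inr ⟨l - 1, Nat.sub_one_lt_of_lt hl⟩}) := by
  rw [Set.union_singleton, SimpleGraph.isClique_insert, isClique_image_inl_iff]
  refine ⟨hB, ?_⟩
  rintro _ ⟨a, ha, rfl⟩ -
  simp [ha]

theorem isClique_pair (i : ℕ) (hi : i + 1 < l) :
    (joinPath G A B l).IsClique {Sum.inr ⟨i, Nat.lt_of_succ_lt hi⟩, Sum.inr ⟨i + 1, hi⟩} :=
  SimpleGraph.isClique_pair.2 fun _ => Or.inl rfl

theorem isMaxClique_image_inl_iff (hA : G.IsClique A) (hB : G.IsClique B) (hl : 2 ≤ l)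
    [Nonempty V] {D : Set V} :
    IsMaxClique (joinPath G A B l) (Sum.inl '' D) ↔ IsMaxClique G D ∧ D ≠ A ∧ D ≠ B := by
  rw [isMaxClique_iff_forall_adj_mem, isClique_image_inl_iff]
  constructor
  · rintro ⟨hD, hmax⟩
    have hmax_inr (i : Fin l) (hi : ∀ a ∈ D, (joinPath G A B l).Adj (Sum.inr i) (Sum.inl a)) :
        False := by
      simpa using hmax (Sum.inr i) (by simpa using hi)
    refine ⟨isMaxClique_iff_forall_adj_mem.2 ⟨hD, fun v hv => ?_⟩, ?_, ?_⟩
    · simpa using hmax (Sum.inl v) (by simpa using hv)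
    · rintro rfl
      exact hmax_inr ⟨0, by omega⟩ fun a ha => Or.inl ⟨rfl, ha⟩
    · rintro rfl
      exact hmax_inr ⟨l - 1, by omega⟩ fun a ha => Or.inr ⟨rfl, ha⟩
  · rintro ⟨hD, hDA, hDB⟩
    obtain ⟨a, ha⟩ := hD.nonempty
    refine ⟨hD.1, ?_⟩
    rintro (v | i) hv
    · exact ⟨v, (isMaxClique_iff_forall_adj_mem.1 hD).2 v fun w hw hvw =>
        hv _ ⟨w, hw, rfl⟩ (by simpa), rfl⟩
    · have hadj : ∀ b ∈ D, (i.val = 0 ∧ b ∈ A) ∨ (i.val = l - 1 ∧ b ∈ B) :=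
        fun b hb => hv _ ⟨b, hb, rfl⟩ (by simp)
      exfalso
      rcases hadj a ha with ⟨hi, -⟩ | ⟨hi, -⟩
      · exact hDA (hD.2 A hA fun b hb => ((hadj b hb).resolve_right fun ⟨h, _⟩ => by omega).2)
      · exact hDB (hD.2 B hB fun b hb => ((hadj b hb).resolve_left fun ⟨h, _⟩ => by omega).2)

theorem isMaxClique_first (hA : IsMaxClique G A) (hAne : A.Nonempty) (hAB : Disjoint A B)
    (hl : 0 < l) : IsMaxClique (joinPath G A B l) (Sum.inl '' A ∪ {Sum.inr ⟨0, hl⟩}) := by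
  obtain ⟨a, ha⟩ := hAne
  refine isMaxClique_iff_forall_adj_mem.2 ⟨isClique_first hA.1 hl, ?_⟩
  rintro (v | i) hv
  · exact Or.inl ⟨v, (isMaxClique_iff_forall_adj_mem.1 hA).2 v fun w hw hvw =>
      hv _ (Or.inl ⟨w, hw, rfl⟩) (by simpa), rfl⟩
  · rcases hv _ (Or.inl ⟨a, ha, rfl⟩) (by simp) with ⟨hi, -⟩ | ⟨-, haB⟩
    · exact Or.inr (congrArg Sum.inr (Fin.ext hi))
    · exact absurd haB (Set.disjoint_left.1 hAB ha)

theorem isMaxClique_last (hB : IsMaxClique G B) (hBne : B.Nonempty) (hAB : Disjoint A B)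
    (hl : 0 < l) :
    IsMaxClique (joinPath G A B l)
      (Sum.inl '' B ∪ {Sum.inr ⟨l - 1, Nat.sub_one_lt_of_lt hl⟩}) := by
  obtain ⟨b, hb⟩ := hBne
  refine isMaxClique_iff_forall_adj_mem.2 ⟨isClique_last hB.1 hl, ?_⟩
  rintro (v | i) hv
  · exact Or.inl ⟨v, (isMaxClique_iff_forall_adj_mem.1 hB).2 v fun w hw hvw =>
      hv _ (Or.inl ⟨w, hw, rfl⟩) (by simpa), rfl⟩
  · rcases hv _ (Or.inl ⟨b, hb, rfl⟩) (by simp) with ⟨-, hbA⟩ | ⟨hi, -⟩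
    · exact absurd hb (Set.disjoint_left.1 hAB hbA)
    · exact Or.inr (congrArg Sum.inr (Fin.ext hi))

theorem isMaxClique_pair (hAB : Disjoint A B) (i : ℕ) (hi : i + 1 < l) :
    IsMaxClique (joinPath G A B l) {Sum.inr ⟨i, Nat.lt_of_succ_lt hi⟩, Sum.inr ⟨i + 1, hi⟩} := by
  refine isMaxClique_iff_forall_adj_mem.2 ⟨isClique_pair i hi, ?_⟩
  rintro (a | k) hv
  · have h₁ := hv (Sum.inr ⟨i, by omega⟩) (by simp) (by simp)
    have h₂ := hv (Sum.inr ⟨i + 1, hi⟩) (by simp) (by simp)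
    simp only [adj_inl_inr] at h₁ h₂
    exfalso
    rcases h₂ with ⟨h₂, -⟩ | ⟨h₂, haB⟩
    · omega
    · rcases h₁ with ⟨-, haA⟩ | ⟨h₁, -⟩
      · exact Set.disjoint_left.1 hAB haA haB
      · omega
  · by_contra hk
    simp only [Set.mem_insert_iff, Set.mem_singleton_iff, Sum.inr.injEq, Fin.ext_iff,
      not_or] at hk
    have h₁ := hv (Sum.inr ⟨i, by omega⟩) (by simp) (by simpa [Fin.ext_iff] using hk.1)
    have h₂ := hv (Sum.inr ⟨i + 1, hi⟩) (by simp) (by simpa [Fin.ext_iff] using hk.2)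
    simp only [adj_inr_inr] at h₁ h₂
    omega

theorem eq_pair_or_first_or_last_of_inr_mem (hA : G.IsClique A) (hB : G.IsClique B)
    (hAB : Disjoint A B) (hl : 2 ≤ l) {s : Set (V ⊕ Fin l)}
    (hs : IsMaxClique (joinPath G A B l) s) {i : Fin l} (hi : Sum.inr i ∈ s) :
    (∃ i : ℕ, ∃ hi : i + 1 < l, s = {Sum.inr ⟨i, Nat.lt_of_succ_lt hi⟩, Sum.inr ⟨i + 1, hi⟩}) ∨
      s = Sum.inl '' A ∪ {Sum.inr ⟨0, Nat.zero_lt_of_lt hl⟩} ∨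
      s = Sum.inl '' B ∪ {Sum.inr ⟨l - 1, Nat.sub_one_lt_of_lt hl⟩} := by
  by_cases hother : ∃ j ≠ i, Sum.inr j ∈ s
  · obtain ⟨j, hji, hj⟩ := hother
    have hadj := hs.1 hj hi (by simpa using hji)
    rw [adj_inr_inr] at hadj
    obtain ⟨m, hm, hsub⟩ : ∃ m, ∃ hm : m + 1 < l,
        {Sum.inr (⟨m, Nat.lt_of_succ_lt hm⟩ : Fin l), Sum.inr ⟨m + 1, hm⟩} ⊆ s := by
      rcases hadj with h | h
      · refine ⟨j, by omega, Set.insert_subset (by exact hj) (Set.singleton_subset_iff.2 ?_)⟩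
        rwa [show (⟨j + 1, _⟩ : Fin l) = i from Fin.ext h]
      · refine ⟨i, by omega, Set.insert_subset (by exact hi) (Set.singleton_subset_iff.2 ?_)⟩
        rwa [show (⟨i + 1, _⟩ : Fin l) = j from Fin.ext h]
    exact Or.inl ⟨m, hm, ((isMaxClique_pair hAB m hm).2 s hs.1 hsub).symm⟩
  · have hinl (a : V) (ha : Sum.inl a ∈ s) : (i.val = 0 ∧ a ∈ A) ∨ (i.val = l - 1 ∧ a ∈ B) :=
      hs.1 ha hi (by simp)
    have hinr (j : Fin l) (hj : Sum.inr j ∈ s) : j = i := by_contra fun h => hother ⟨j, h, hj⟩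
    rcases (by omega : i.val = 0 ∨ i.val = l - 1 ∨ (i.val + 1 < l ∧ i.val ≠ 0 ∧ i.val ≠ l - 1))
      with h | h | ⟨h, h₀, h₁⟩
    · refine Or.inr (Or.inl (hs.2 _ (isClique_first hA _) ?_))
      rintro (a | j) hx
      · exact Or.inl ⟨a, ((hinl a hx).resolve_right fun ⟨h', _⟩ => by omega).2, rfl⟩
      · exact Or.inr (congrArg Sum.inr ((hinr j hx).trans (Fin.ext h)))
    · refine Or.inr (Or.inr (hs.2 _ (isClique_last hB (by omega)) ?_))
      rintro (a | j) hx
      · exact Or.inl ⟨a, ((hinl a hx).resolve_left fun ⟨h', _⟩ => by omega).2, rfl⟩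
      · exact Or.inr (congrArg Sum.inr ((hinr j hx).trans (Fin.ext h)))
    · refine Or.inl ⟨i, h, hs.2 _ (isClique_pair i h) ?_⟩
      rintro (a | j) hx
      · rcases hinl a hx with ⟨h', -⟩ | ⟨h', -⟩ <;> omega
      · exact Or.inl (congrArg Sum.inr (hinr j hx))

end joinPath

theorem stmt1 {V : Type} (G : SimpleGraph V) (C C' : Set V) (l : ℕ)
    (hG : IsGate G) (hC : IsMaxClique G C) (hC' : IsMaxClique G C')
    (hdisj : Disjoint C C') (hl : 2 ≤ l) (s : Set (V ⊕ Fin l)) :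
    IsMaxClique (joinPath G C C' l) s ↔
      ((∃ D : Set V, IsMaxClique G D ∧ D ≠ C ∧ D ≠ C' ∧ s = Sum.inl '' D) ∨
       (∃ i : ℕ, ∃ hi : i + 1 < l, s = {Sum.inr ⟨i, by omega⟩, Sum.inr ⟨i + 1, hi⟩}) ∨
       (s = Sum.inl '' C ∪ {Sum.inr ⟨0, by omega⟩}) ∨
       (s = Sum.inl '' C' ∪ {Sum.inr ⟨l - 1, by omega⟩})) := by
  have := hG.nonempty
  constructor
  · intro hs
    by_cases hsl : s ⊆ Set.range Sum.inl
    · obtain ⟨D, rfl⟩ := Set.subset_range_iff_exists_image_eq.1 hsl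
      obtain ⟨hD, hDC, hDC'⟩ := (joinPath.isMaxClique_image_inl_iff hC.1 hC'.1 hl).1 hs
      exact Or.inl ⟨D, hD, hDC, hDC', rfl⟩
    · obtain ⟨x, hx, hxl⟩ := Set.not_subset.1 hsl
      rcases x with a | i
      · exact absurd ⟨a, rfl⟩ hxl
      · exact Or.inr (joinPath.eq_pair_or_first_or_last_of_inr_mem hC.1 hC'.1 hdisj hl hs hx)
  · rintro (⟨D, hD, hDC, hDC', rfl⟩ | ⟨i, hi, rfl⟩ | rfl | rfl)
    · exact (joinPath.isMaxClique_image_inl_iff hC.1 hC'.1 hl).2 ⟨hD, hDC, hDC'⟩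
    · exact joinPath.isMaxClique_pair hdisj i hi
    · exact joinPath.isMaxClique_first hC hC.nonempty hdisj (by omega)
    · exact joinPath.isMaxClique_last hC' hC'.nonempty hdisj (by omega)
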